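/- Let r be a well-founded, extensional binary relation on a set A (extensional means: for all a, b ∈ A, if {x ∈ A : r x a} = {x ∈ A : r x b} then a = b). Then there is a transitive set T and a bijection f : A → T such that for all a, b ∈ A, r a b if and only if f(a) ∈ f(b); moreover T is unique. (Mostowski Collapsing Lemma.) -/

import Mathlib

universe u

open Cardinal Ordinal

/-- The von Neumann cumulative hierarchy: `V α = ⋃_{β < α} 𝒫 (V β)`. -/
noncomputable def VonNeumannV (α : Ordinal.{u}) : ZFSet.{u} :=
  ZFSet.sUnion <| ZFSet.range fun β : α.ToType =>
    ZFSet.powerset (VonNeumannV ((ToType.mk (o := α)).symm β))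
termination_by α
decreasing_by exact ((ToType.mk (o := α)).symm β).2

/-- The cardinality of a ZFC set, as a `Cardinal.{u}`. -/
noncomputable def ZFSet.card' (x : ZFSet.{u}) : Cardinal.{u} :=
  Cardinal.mk (@Shrink.{u} x.toSet (ZFSet.small_coe x))

theorem mostowski_collapse (A : ZFSet.{u}) (r : ZFSet.{u} → ZFSet.{u} → Prop)
    (hwf : WellFounded fun a b : ↥A.toSet => r a b)
    (hext : ∀ a ∈ A, ∀ b ∈ A, (∀ x ∈ A, (r x a ↔ r x b)) → a = b) :
    ∃! T : ZFSet.{u}, T.IsTransitive ∧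
      ∃ f : ↥A.toSet → ↥T.toSet, Function.Bijective f ∧
        ∀ a b : ↥A.toSet, r a b ↔ (f a : ZFSet.{u}) ∈ (f b : ZFSet.{u}) := by
  classical
  haveI := ZFSet.small_coe A
  -- the Mostowski collapse function
  let F : ↥A.toSet → ZFSet.{u} := hwf.fix (C := fun _ => ZFSet.{u})
    (fun a IH => ZFSet.range.{u, u} fun p : Shrink.{u} {x : ↥A.toSet // r x a} =>
      IH ((equivShrink _).symm p).1 ((equivShrink _).symm p).2)
  have hmem : ∀ (a : ↥A.toSet) (z : ZFSet.{u}),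
      z ∈ F a ↔ ∃ x : ↥A.toSet, r x a ∧ F x = z := by
    intro a z
    have : F a = ZFSet.range.{u, u} fun p : Shrink.{u} {x : ↥A.toSet // r x a} =>
        F ((equivShrink _).symm p).1 := by
      simpa [F] using hwf.fix_eq (C := fun _ => ZFSet.{u})
        (fun a IH => ZFSet.range.{u, u} fun p : Shrink.{u} {x : ↥A.toSet // r x a} =>
          IH ((equivShrink _).symm p).1 ((equivShrink _).symm p).2) a
    rw [this, ZFSet.mem_range]
    constructor
    · rintro ⟨p, rfl⟩
      exact ⟨((equivShrink _).symm p).1, ((equivShrink _).symm p).2, rfl⟩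
    · rintro ⟨x, hx, rfl⟩
      exact ⟨equivShrink _ ⟨x, hx⟩, by simp⟩
  -- injectivity of F
  have hinj : ∀ a b : ↥A.toSet, F a = F b → a = b := by
    intro a
    induction a using WellFounded.induction hwf with
    | _ a IH =>
      intro b hab
      refine Subtype.ext (hext a a.2 b b.2 ?_)
      intro x hx
      constructor
      · intro hxa
        have : F ⟨x, hx⟩ ∈ F b := by rw [← hab]; exact (hmem a _).2 ⟨⟨x, hx⟩, hxa, rfl⟩
        obtain ⟨y, hyb, hFy⟩ := (hmem b _).1 this
        have heq := IH ⟨x, hx⟩ hxa y hFy.symm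
        rw [← heq] at hyb; exact hyb
      · intro hxb
        have : F ⟨x, hx⟩ ∈ F a := by rw [hab]; exact (hmem b _).2 ⟨⟨x, hx⟩, hxb, rfl⟩
        obtain ⟨y, hya, hFy⟩ := (hmem a _).1 this
        have heq := IH y hya ⟨x, hx⟩ hFy
        rw [heq] at hya; exact hya
  have hiff : ∀ a b : ↥A.toSet, r a b ↔ F a ∈ F b := by
    intro a b
    constructor
    · intro h; exact (hmem b _).2 ⟨a, h, rfl⟩
    · intro h
      obtain ⟨x, hx, hFx⟩ := (hmem b _).1 h
      rwa [← hinj x a hFx]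
  -- the transitive set T
  set T : ZFSet.{u} := ZFSet.range.{u, u} fun p : Shrink.{u} ↥A.toSet =>
    F ((equivShrink _).symm p) with hT
  have hmemT : ∀ z : ZFSet.{u}, z ∈ T ↔ ∃ a : ↥A.toSet, F a = z := by
    intro z
    rw [hT, ZFSet.mem_range]
    constructor
    · rintro ⟨p, rfl⟩; exact ⟨(equivShrink _).symm p, rfl⟩
    · rintro ⟨a, rfl⟩; exact ⟨equivShrink _ a, by simp⟩
  refine ⟨T, ⟨?_, ?_⟩, ?_⟩
  · intro y hy z hz
    rw [hmemT] at hy ⊢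
    obtain ⟨a, rfl⟩ := hy
    obtain ⟨x, _, hFx⟩ := (hmem _ _).1 hz
    exact ⟨x, hFx⟩
  · refine ⟨fun a => ⟨F a, (hmemT _).2 ⟨a, rfl⟩⟩, ⟨?_, ?_⟩, ?_⟩
    · intro a b h
      exact hinj a b (congrArg Subtype.val h)
    · rintro ⟨z, hz⟩
      obtain ⟨a, rfl⟩ := (hmemT z).1 hz
      exact ⟨a, rfl⟩
    · intro a b; exact hiff a b
  -- uniqueness
  · rintro T' ⟨hT', f', hbij, hrel⟩
    have hf'eq : ∀ a : ↥A.toSet, (f' a : ZFSet.{u}) = F a := by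
      intro a
      induction a using WellFounded.induction hwf with
      | _ a IH =>
        refine ZFSet.ext fun z => ?_
        rw [hmem]
        constructor
        · intro hz
          have hzT' : z ∈ T' := hT' _ (f' a).2 hz
          obtain ⟨x, hx⟩ := hbij.2 ⟨z, hzT'⟩
          have hxz : (f' x : ZFSet.{u}) = z := congrArg Subtype.val hx
          have hrxa : r x a := (hrel x a).2 (by rw [hxz]; exact hz)
          exact ⟨x, hrxa, by rw [← IH x hrxa, hxz]⟩
        · rintro ⟨x, hx, rfl⟩
          have : (f' x : ZFSet.{u}) ∈ (f' a : ZFSet.{u}) := (hrel x a).1 hx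
          rwa [IH x hx] at this
    refine ZFSet.ext fun z => ?_
    rw [hmemT]
    constructor
    · intro hz
      obtain ⟨x, hx⟩ := hbij.2 ⟨z, hz⟩
      have hxz : (f' x : ZFSet.{u}) = z := congrArg Subtype.val hx
      exact ⟨x, by rw [← hf'eq, hxz]⟩
    · rintro ⟨a, rfl⟩
      have := (f' a).2
      rw [hf'eq] at this; exact this
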